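/- Suppose for each terminal, its singleton is the max-vol minimum isolating cut. Then for any single edge e = uv, the min isolating cut sizes of at most two terminals decrease when e is removed. -/
import Mathlib


open Finset

variable {V : Type*} [Fintype V] [DecidableEq V]

/-- The size of the cut `(S, V \ S)`: total weight of edges with exactly one
endpoint in `S` (each such edge `uv` with `u ∈ S`, `v ∉ S` counted once). -/
def cutSize (w : V → V → ℕ) (S : Finset V) : ℕ :=
  ∑ u ∈ S, ∑ v ∈ Sᶜ, w u v

/-- `X` is an `(S,T)`-cut: `S ⊆ X ⊆ V \ T`. -/
def IsSTCut (S T X : Finset V) : Prop := S ⊆ X ∧ Disjoint X T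

/-- `X` is a minimum `(S,T)`-cut. -/
def IsMinSTCut (w : V → V → ℕ) (S T X : Finset V) : Prop :=
  IsSTCut S T X ∧ ∀ Y : Finset V, IsSTCut S T Y → cutSize w X ≤ cutSize w Y

/-- `X` is the maximum-volume minimum `(S,T)`-cut: a minimum `(S,T)`-cut
containing every minimum `(S,T)`-cut. -/
def IsMaxVolMinCut (w : V → V → ℕ) (S T X : Finset V) : Prop :=
  IsMinSTCut w S T X ∧ ∀ Y : Finset V, IsMinSTCut w S T Y → Y ⊆ X

/-- The minimum isolating cut size for terminal `t` w.r.t. terminal set `T`. -/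
noncomputable def isoMu (w : V → V → ℕ) (T : Finset V) (t : V) : ℕ :=
  sInf {n | ∃ X : Finset V, t ∈ X ∧ Disjoint X (T.erase t) ∧ cutSize w X = n}

/-- The weight function obtained from `w` by deleting the edge `uv`. -/
def deleteEdge (w : V → V → ℕ) (u v : V) : V → V → ℕ :=
  fun a b => if (a = u ∧ b = v) ∨ (a = v ∧ b = u) then 0 else w a b

/-- A multiterminal cut for terminals `t 0, …, t (p-1)`, given as the function
assigning each vertex to its part: terminal `t i` must lie in part `i`. -/
def IsMTC {p : ℕ} (t : Fin p → V) (f : V → Fin p) : Prop :=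
  ∀ i, f (t i) = i

/-- The size of a multiterminal cut: total weight of crossing edges
(each unordered pair is counted twice in the double sum, hence the `/ 2`). -/
def mtcSize {p : ℕ} (w : V → V → ℕ) (f : V → Fin p) : ℚ :=
  (∑ u : V, ∑ v : V, if f u = f v then 0 else (w u v : ℚ)) / 2

/-- A minimum multiterminal cut. -/
def IsMinMTC {p : ℕ} (w : V → V → ℕ) (t : Fin p → V) (f : V → Fin p) : Prop :=
  IsMTC t f ∧ ∀ g : V → Fin p, IsMTC t g → mtcSize w f ≤ mtcSize w g
lemma cutSize_eq (w : V → V → ℕ) (S : Finset V) :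
    cutSize w S = ∑ a : V, ∑ b : V, if a ∈ S ∧ b ∉ S then w a b else 0 := by
  unfold cutSize
  have h1 : ∀ a : V, (∑ b : V, if a ∈ S ∧ b ∉ S then w a b else 0)
      = if a ∈ S then ∑ b ∈ Sᶜ, w a b else 0 := by
    intro a
    by_cases h : a ∈ S
    · simp only [h, true_and, if_true]
      rw [← Finset.sum_filter]
      congr 1
      ext b
      simp
    · simp [h]
  simp_rw [h1]
  rw [← Finset.sum_filter]
  congr 1
  ext a
  simp

lemma two_mul_cutSize (w : V → V → ℕ) (S : Finset V) :
    2 * cutSize w S = ∑ a : V, ∑ b : V,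
      ((if a ∈ S ∧ b ∉ S then w a b else 0) + (if b ∈ S ∧ a ∉ S then w b a else 0)) := by
  simp_rw [Finset.sum_add_distrib]
  rw [two_mul, cutSize_eq]
  congr 1
  rw [Finset.sum_comm]

lemma posimod (w : V → V → ℕ) (hs : ∀ a b, w a b = w b a) (A B : Finset V) :
    cutSize w (A \ B) + cutSize w (B \ A) ≤ cutSize w A + cutSize w B := by
  have h2 : 2 * (cutSize w (A \ B) + cutSize w (B \ A)) ≤ 2 * (cutSize w A + cutSize w B) := by
    rw [mul_add, mul_add, two_mul_cutSize, two_mul_cutSize, two_mul_cutSize, two_mul_cutSize,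
      ← Finset.sum_add_distrib, ← Finset.sum_add_distrib]
    refine Finset.sum_le_sum fun a _ => ?_
    rw [← Finset.sum_add_distrib, ← Finset.sum_add_distrib]
    refine Finset.sum_le_sum fun b _ => ?_
    have hba := hs b a
    by_cases h1 : a ∈ A <;> by_cases h2 : a ∈ B <;> by_cases h3 : b ∈ A <;> by_cases h4 : b ∈ B <;>
      simp [Finset.mem_sdiff, h1, h2, h3, h4, hba] <;> omega
  omega

lemma deleteEdge_symm (w : V → V → ℕ) (hs : ∀ a b, w a b = w b a) (u v : V) :
    ∀ a b, deleteEdge w u v a b = deleteEdge w u v b a := by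
  intro a b
  unfold deleteEdge
  rw [hs a b]
  congr 1
  simp [or_comm, and_comm]

lemma deleteEdge_comm (w : V → V → ℕ) (u v : V) : deleteEdge w u v = deleteEdge w v u := by
  funext a b
  unfold deleteEdge
  exact if_congr or_comm rfl rfl

lemma cutSize_deleteEdge_eq (w : V → V → ℕ) (u v : V) (X : Finset V)
    (h : u ∈ X ↔ v ∈ X) : cutSize (deleteEdge w u v) X = cutSize w X := by
  unfold cutSize
  refine Finset.sum_congr rfl fun a ha => Finset.sum_congr rfl fun b hb => ?_
  rw [Finset.mem_compl] at hb
  unfold deleteEdge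
  rw [if_neg]
  rintro (⟨rfl, rfl⟩ | ⟨rfl, rfl⟩)
  · exact hb (h.mp ha)
  · exact hb (h.mpr ha)

lemma isoMu_le (w : V → V → ℕ) (T : Finset V) (t : V) (X : Finset V)
    (hx : t ∈ X) (hd : Disjoint X (T.erase t)) : isoMu w T t ≤ cutSize w X :=
  Nat.sInf_le ⟨X, hx, hd, rfl⟩

lemma isoMu_attained (w : V → V → ℕ) (T : Finset V) (t : V) :
    ∃ X : Finset V, t ∈ X ∧ Disjoint X (T.erase t) ∧ cutSize w X = isoMu w T t := by
  have hne : {n | ∃ X : Finset V, t ∈ X ∧ Disjoint X (T.erase t) ∧ cutSize w X = n}.Nonempty :=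
    ⟨cutSize w {t}, {t}, Finset.mem_singleton_self t,
      Finset.disjoint_singleton_left.mpr (Finset.notMem_erase t T), rfl⟩
  exact Nat.sInf_mem hne

lemma key_lemma (w : V → V → ℕ) (hsymm : ∀ a b, w a b = w b a) (T : Finset V) (u v : V)
    (t1 t2 : V) (ht1 : t1 ∈ T) (ht2 : t2 ∈ T) (hne : t1 ≠ t2)
    (X1 X2 : Finset V)
    (hx1 : t1 ∈ X1) (hd1 : Disjoint X1 (T.erase t1))
    (hc1 : cutSize (deleteEdge w u v) X1 < isoMu w T t1)
    (hx2 : t2 ∈ X2) (hd2 : Disjoint X2 (T.erase t2))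
    (hc2 : cutSize (deleteEdge w u v) X2 < isoMu w T t2)
    (hu1 : u ∈ X1) (hv1 : v ∉ X1) (hu2 : u ∈ X2) (hv2 : v ∉ X2) : False := by
  set w' := deleteEdge w u v with hw'
  have ht1X2 : t1 ∉ X2 := fun h => (Finset.disjoint_left.mp hd2 h) (Finset.mem_erase.mpr ⟨hne, ht1⟩)
  have ht2X1 : t2 ∉ X1 := fun h => (Finset.disjoint_left.mp hd1 h)
    (Finset.mem_erase.mpr ⟨hne.symm, ht2⟩)
  have htA : t1 ∈ X1 \ X2 := Finset.mem_sdiff.mpr ⟨hx1, ht1X2⟩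
  have htB : t2 ∈ X2 \ X1 := Finset.mem_sdiff.mpr ⟨hx2, ht2X1⟩
  have hdA : Disjoint (X1 \ X2) (T.erase t1) := hd1.mono_left Finset.sdiff_subset
  have hdB : Disjoint (X2 \ X1) (T.erase t2) := hd2.mono_left Finset.sdiff_subset
  have hmuA : isoMu w T t1 ≤ cutSize w (X1 \ X2) := isoMu_le w T t1 _ htA hdA
  have hmuB : isoMu w T t2 ≤ cutSize w (X2 \ X1) := isoMu_le w T t2 _ htB hdB
  have heqA : cutSize w' (X1 \ X2) = cutSize w (X1 \ X2) := by
    refine cutSize_deleteEdge_eq w u v _ ?_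
    simp [Finset.mem_sdiff, hu2, hv1]
  have heqB : cutSize w' (X2 \ X1) = cutSize w (X2 \ X1) := by
    refine cutSize_deleteEdge_eq w u v _ ?_
    simp [Finset.mem_sdiff, hu1, hv2]
  have hpos : cutSize w' (X1 \ X2) + cutSize w' (X2 \ X1) ≤ cutSize w' X1 + cutSize w' X2 :=
    posimod w' (deleteEdge_symm w hsymm u v) X1 X2
  omega


/-- If every minimum isolating cut for each terminal is the singleton of that
terminal, then deleting a single edge decreases the minimum isolating cut sizes
of at most two terminals. -/
theorem atMostTwo_terminals_decrease (w : V → V → ℕ) (hsymm : ∀ u v, w u v = w v u)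
    (T : Finset V)
    (hsing : ∀ s ∈ T, ∀ X : Finset V, s ∈ X → Disjoint X (T.erase s) →
      cutSize w X = isoMu w T s → X = {s})
    (u v : V) (huv : u ≠ v) :
    (T.filter fun t => isoMu (deleteEdge w u v) T t < isoMu w T t).card ≤ 2 := by
  by_contra hcard
  push_neg at hcard
  rw [Finset.two_lt_card] at hcard
  obtain ⟨t1, h1, t2, h2, t3, h3, h12, h13, h23⟩ := hcard
  have get : ∀ t ∈ T.filter fun t => isoMu (deleteEdge w u v) T t < isoMu w T t,
      ∃ X : Finset V, t ∈ X ∧ Disjoint X (T.erase t) ∧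
        cutSize (deleteEdge w u v) X < isoMu w T t ∧
        ((u ∈ X ∧ v ∉ X) ∨ (v ∈ X ∧ u ∉ X)) := by
    intro t ht
    rw [Finset.mem_filter] at ht
    obtain ⟨htT, hlt⟩ := ht
    obtain ⟨X, hx, hd, hc⟩ := isoMu_attained (deleteEdge w u v) T t
    have hcc : cutSize (deleteEdge w u v) X < isoMu w T t := hc ▸ hlt
    refine ⟨X, hx, hd, hcc, ?_⟩
    by_contra hcon
    push_neg at hcon
    have hiff : u ∈ X ↔ v ∈ X := by tauto
    have := cutSize_deleteEdge_eq w u v X hiff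
    have := isoMu_le w T t X hx hd
    omega
  obtain ⟨X1, hx1, hd1, hc1, hs1⟩ := get t1 h1
  obtain ⟨X2, hx2, hd2, hc2, hs2⟩ := get t2 h2
  obtain ⟨X3, hx3, hd3, hc3, hs3⟩ := get t3 h3
  rw [Finset.mem_filter] at h1 h2 h3
  have hT1 := h1.1; have hT2 := h2.1; have hT3 := h3.1
  have hc1' := hc1; have hc2' := hc2; have hc3' := hc3
  rw [deleteEdge_comm w u v] at hc1' hc2' hc3'
  rcases hs1 with ⟨a1, b1⟩ | ⟨a1, b1⟩ <;> rcases hs2 with ⟨a2, b2⟩ | ⟨a2, b2⟩ <;>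
    rcases hs3 with ⟨a3, b3⟩ | ⟨a3, b3⟩
  · exact key_lemma w hsymm T u v t1 t2 hT1 hT2 h12 X1 X2 hx1 hd1 hc1 hx2 hd2 hc2 a1 b1 a2 b2
  · exact key_lemma w hsymm T u v t1 t2 hT1 hT2 h12 X1 X2 hx1 hd1 hc1 hx2 hd2 hc2 a1 b1 a2 b2
  · exact key_lemma w hsymm T u v t1 t3 hT1 hT3 h13 X1 X3 hx1 hd1 hc1 hx3 hd3 hc3 a1 b1 a3 b3
  · exact key_lemma w hsymm T v u t2 t3 hT2 hT3 h23 X2 X3 hx2 hd2 hc2' hx3 hd3 hc3' a2 b2 a3 b3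
  · exact key_lemma w hsymm T u v t2 t3 hT2 hT3 h23 X2 X3 hx2 hd2 hc2 hx3 hd3 hc3 a2 b2 a3 b3
  · exact key_lemma w hsymm T v u t1 t3 hT1 hT3 h13 X1 X3 hx1 hd1 hc1' hx3 hd3 hc3' a1 b1 a3 b3
  · exact key_lemma w hsymm T v u t1 t2 hT1 hT2 h12 X1 X2 hx1 hd1 hc1' hx2 hd2 hc2' a1 b1 a2 b2
  · exact key_lemma w hsymm T v u t1 t2 hT1 hT2 h12 X1 X2 hx1 hd1 hc1' hx2 hd2 hc2' a1 b1 a2 b2
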